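/- Let m ≥ 2, 1 ≤ ℓ ≤ m, and let (f_1, …, f_ℓ) be a (2m, ℓ) bent vectorial function on GF(2^{2m}). Fix a codeword u of C(f_1, …, f_ℓ) of Hamming weight 2^{2m−1} − 2^{m−1} and let B = supp(u). Then for every two distinct elements x, y of B, the number of codewords v of weight 2^{2m−1} − 2^{m−1} with |B ∩ supp(v)| = 2^{2m−2} − 2^{m−1} and with x, y ∈ supp(v) is exactly 2^{2m−2} − 2^{m−1} − 1; that is, the intersections B ∩ supp(v) over all such v form a 2-(2^{2m−1} − 2^{m−1}, 2^{2m−2} − 2^{m−1}, 2^{2m−2} − 2^{m−1} − 1) design on the point set B. -/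

import Mathlib

noncomputable section

/-- The finite field `GF(2^n)` is finite. -/
instance (n : ℕ) : Fintype (GaloisField 2 n) := Fintype.ofFinite _

/-- The absolute trace map from `GF(2^(2m))` to `GF(2)`. -/
def tr (m : ℕ) (x : GaloisField 2 (2*m)) : ZMod 2 :=
  Algebra.trace (ZMod 2) (GaloisField 2 (2*m)) x

/-- A Boolean function `f : GF(2^(2m)) → GF(2)` is bent if all its Walsh
transform values have absolute value `2^m`. -/
def IsBent (m : ℕ) (f : GaloisField 2 (2*m) → ZMod 2) : Prop :=
  ∀ w : GaloisField 2 (2*m),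
    |∑ x : GaloisField 2 (2*m), (-1 : ℤ) ^ ((f x + tr m (w * x)).val)| = 2 ^ m

/-- A tuple `(f 0, …, f (ℓ-1))` of Boolean functions on `GF(2^(2m))` is a
`(2m, ℓ)` bent vectorial function if every nonzero `GF(2)`-linear combination
of the `f j` is bent. -/
def IsBentVectorial (m ℓ : ℕ) (f : Fin ℓ → GaloisField 2 (2*m) → ZMod 2) : Prop :=
  ∀ a : Fin ℓ → ZMod 2, a ≠ 0 → IsBent m (fun x => ∑ j, a j * f j x)

/-- The binary linear code `C(f 0, …, f (ℓ-1))` of length `2^(2m)` (with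
coordinates indexed by `GF(2^(2m))`, a codeword being a function
`GF(2^(2m)) → GF(2)`, i.e. the truth table of a Boolean function), spanned by
the truth tables of the `f j`, the truth tables of the linear functions
`x ↦ tr (w * x)` for all `w`, and the all-one vector. -/
def code (m ℓ : ℕ) (f : Fin ℓ → GaloisField 2 (2*m) → ZMod 2) :
    Submodule (ZMod 2) (GaloisField 2 (2*m) → ZMod 2) :=
  Submodule.span (ZMod 2)
    (Set.range f ∪ Set.range (fun w => fun x => tr m (w * x)) ∪ {fun _ => (1 : ZMod 2)})

/-- The Hamming weight of a codeword: the number of nonzero coordinates. -/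
def wt (m : ℕ) (c : GaloisField 2 (2*m) → ZMod 2) : ℕ :=
  {x | c x ≠ 0}.ncard

/-- The support of a codeword: the set of coordinates where it is nonzero. -/
def supp (m : ℕ) (c : GaloisField 2 (2*m) → ZMod 2) : Set (GaloisField 2 (2*m)) :=
  {x | c x ≠ 0}


/-!
Write `S(c) = ∑ (-1)^{c(z)}`. A word has weight `2^{2m-1} - 2^{m-1}` iff `S = 2^m`, and two such
words meet in `2^{2m-2} - 2^{m-1}` points iff their sum is balanced. Every codeword is a
combination of the `f_j` plus an affine function; as nonzero combinations of the `f_j` are bent, a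
balanced codeword is a nonconstant affine function, and `u` has all Walsh values `W(w) = ±2^m`.
So the codewords `v` in question are the words `u + Tr(w(· + x))`, `w ≠ 0`, with `A_x(w) = 2^m`
and `A_y(w) = 2^m`, where `A_z(w) = (-1)^{Tr(wz)} W(w) = ±2^m` is `S(u + Tr(w(· + z)))`.
These `w` are counted by `∑_w (2^m + A_x(w))(2^m + A_y(w))`, which Fourier inversion
(`∑_w A_x(w) = -2^{2m}` as `u(x) = 1`) and orthogonality of characters
(`∑_w A_x(w) A_y(w) = 0` as `x ≠ y`) evaluate.
-/

open Finset

section ZModTwo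

lemma eq_one_of_ne_zero_zmod_two : ∀ {a : ZMod 2}, a ≠ 0 → a = 1 := by decide

lemma neg_one_pow_val_add (a b : ZMod 2) :
    (-1 : ℤ) ^ (a + b).val = (-1) ^ a.val * (-1) ^ b.val := by
  revert a b; decide

lemma neg_one_pow_val_eq_one_sub_two_mul (a : ZMod 2) : (-1 : ℤ) ^ a.val = 1 - 2 * a.val := by
  revert a; decide

lemma four_mul_val_mul (a b : ZMod 2) :
    4 * ((a * b).val : ℤ) = (1 - (-1) ^ a.val) * (1 - (-1) ^ b.val) := by
  revert a b; decide

lemma neg_one_pow_val_eq_one_iff (a : ZMod 2) : (-1 : ℤ) ^ a.val = 1 ↔ a = 0 := by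
  revert a; decide

end ZModTwo

lemma two_pow_eq_two_mul_two_pow_pred {n : ℕ} (hn : n ≠ 0) :
    ((2 ^ n : ℕ) : ℤ) = 2 * ((2 ^ (n - 1) : ℕ) : ℤ) := by
  push_cast
  rw [← pow_succ', Nat.sub_add_cancel (Nat.one_le_iff_ne_zero.2 hn)]

lemma four_mul_sq_mul_ncard_eq_sum {ι : Type*} [Fintype ι] {A B : ι → ℤ} {s : ℤ}
    (hA : ∀ i, |A i| = s) (hB : ∀ i, |B i| = s) :
    4 * s ^ 2 * {i | A i = s ∧ B i = s}.ncard = ∑ i, (s + A i) * (s + B i) := by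
  classical
  rw [Set.ncard_eq_toFinset_card', Set.toFinset_ofPred, card_filter]
  push_cast
  rw [mul_sum]
  refine sum_congr rfl fun i _ => ?_
  have hs : 0 ≤ s := hA i ▸ abs_nonneg _
  rcases (abs_eq hs).1 (hA i) with ha | ha <;> rcases (abs_eq hs).1 (hB i) with hb | hb <;>
    simp only [ha, hb] <;> split_ifs <;> simp_all <;> ring

section SignSum

variable {α : Type*} [Fintype α]

lemma ncard_setOf_ne_zero_eq_sum_val (c : α → ZMod 2) :
    ({x | c x ≠ 0}.ncard : ℤ) = ∑ x, ((c x).val : ℤ) := by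
  classical
  rw [Set.ncard_eq_toFinset_card', Set.toFinset_ofPred, card_filter]
  push_cast
  refine sum_congr rfl fun x _ => ?_
  by_cases h : c x = 0
  · simp [h]
  · simp [eq_one_of_ne_zero_zmod_two h, ZMod.val_one]

def signSum (c : α → ZMod 2) : ℤ := ∑ x, (-1 : ℤ) ^ (c x).val

lemma signSum_eq_card_sub (c : α → ZMod 2) :
    signSum c = Fintype.card α - 2 * {x | c x ≠ 0}.ncard := by
  simp only [signSum, ncard_setOf_ne_zero_eq_sum_val, neg_one_pow_val_eq_one_sub_two_mul,
    sum_sub_distrib, mul_sum, sum_const, card_univ, nsmul_eq_mul, mul_one]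

lemma signSum_add_const (c : α → ZMod 2) (ε : ZMod 2) :
    signSum (fun x => c x + ε) = (-1) ^ ε.val * signSum c := by
  simp only [signSum, neg_one_pow_val_add, mul_sum, mul_comm]

lemma signSum_const (ε : ZMod 2) :
    signSum (fun _ : α => ε) = (-1) ^ ε.val * Fintype.card α := by
  simp [signSum, mul_comm]

lemma four_mul_ncard_inter (u v : α → ZMod 2) :
    4 * (({x | u x ≠ 0} ∩ {x | v x ≠ 0}).ncard : ℤ)
      = Fintype.card α - signSum u - signSum v + signSum (u + v) := by
  have hset : {x | u x ≠ 0} ∩ {x | v x ≠ 0} = {x | u x * v x ≠ 0} := by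
    ext x; simp
  rw [hset, ncard_setOf_ne_zero_eq_sum_val, mul_sum]
  simp only [four_mul_val_mul, signSum, Pi.add_apply, neg_one_pow_val_add]
  simp only [mul_sub, sub_mul, one_mul, mul_one, sum_sub_distrib, sum_const, card_univ,
    nsmul_eq_mul]
  ring

end SignSum

section Trace

variable {K : Type*} [Field K] [Algebra (ZMod 2) K]

/-- In characteristic `2` this is `c + Tr (w (· - x))`, i.e. `c` plus an affine function
vanishing at `x`. -/
def traceTwist (c : K → ZMod 2) (x w : K) : K → ZMod 2 :=
  fun z => c z + Algebra.trace (ZMod 2) K (w * z) + Algebra.trace (ZMod 2) K (w * x)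

lemma traceTwist_apply_self (c : K → ZMod 2) (x w : K) : traceTwist c x w x = c x := by
  simp [traceTwist, add_assoc, CharTwo.add_self_eq_zero]

lemma traceTwist_zero (c : K → ZMod 2) (x : K) : traceTwist c x 0 = c := by
  ext z; simp [traceTwist]

lemma traceTwist_eq_add (c : K → ZMod 2) (x y w : K) :
    traceTwist c y w = fun z => traceTwist c x w z
      + (Algebra.trace (ZMod 2) K (w * x) + Algebra.trace (ZMod 2) K (w * y)) := by
  ext z
  simp only [traceTwist]
  linear_combination -CharTwo.add_self_eq_zero (Algebra.trace (ZMod 2) K (w * x))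

lemma eq_traceTwist_of_add_eq (c : K → ZMod 2) (x : K) {v : K → ZMod 2} {w : K} {ε : ZMod 2}
    (h : ∀ z, c z + v z = Algebra.trace (ZMod 2) K (w * z) + ε) (hx : v x = c x) :
    v = traceTwist c x w := by
  have hε : ε = Algebra.trace (ZMod 2) K (w * x) := by
    have := h x
    rw [hx, CharTwo.add_self_eq_zero] at this
    linear_combination this + CharTwo.add_self_eq_zero ε
  ext z
  simp only [traceTwist, ← hε]
  linear_combination h z - CharTwo.add_self_eq_zero (c z)

variable [Fintype K]

lemma exists_trace_mul_eq_one {w : K} (hw : w ≠ 0) :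
    ∃ z, Algebra.trace (ZMod 2) K (w * z) = 1 := by
  obtain ⟨t, ht⟩ : ∃ t, Algebra.trace (ZMod 2) K t ≠ 0 := by
    by_contra! h
    exact Algebra.trace_ne_zero (ZMod 2) K (LinearMap.ext h)
  refine ⟨w⁻¹ * t, ?_⟩
  rw [← mul_assoc, mul_inv_cancel₀ hw, one_mul, eq_one_of_ne_zero_zmod_two ht]

lemma eq_of_forall_trace_mul_eq {w w' : K}
    (h : ∀ z, Algebra.trace (ZMod 2) K (w * z) = Algebra.trace (ZMod 2) K (w' * z)) :
    w = w' := by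
  by_contra hne
  obtain ⟨z, hz⟩ := exists_trace_mul_eq_one (sub_ne_zero.2 hne)
  rw [sub_mul, map_sub, h, sub_self] at hz
  exact zero_ne_one hz

lemma traceTwist_injective (c : K → ZMod 2) (x : K) : Function.Injective (traceTwist c x) := by
  intro w w' h
  have hx : Algebra.trace (ZMod 2) K (w * x) = Algebra.trace (ZMod 2) K (w' * x) := by
    simpa [traceTwist] using congrFun h 0
  refine eq_of_forall_trace_mul_eq fun z => ?_
  simpa [traceTwist, hx] using congrFun h z

lemma signSum_trace_mul_of_ne_zero {w : K} (hw : w ≠ 0) :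
    signSum (fun z => Algebra.trace (ZMod 2) K (w * z)) = 0 := by
  obtain ⟨t, ht⟩ := exists_trace_mul_eq_one hw
  have hshift : ∑ z, (-1 : ℤ) ^ (Algebra.trace (ZMod 2) K (w * (z + t))).val
      = signSum (fun z => Algebra.trace (ZMod 2) K (w * z)) :=
    Fintype.sum_equiv (Equiv.addRight t) _ _ fun _ => rfl
  simp only [mul_add, map_add, ht, neg_one_pow_val_add, ZMod.val_one, pow_one, mul_neg_one,
    sum_neg_distrib] at hshift
  change -signSum _ = _ at hshift
  linarith

lemma signSum_trace_mul_add_const_of_ne_zero {w : K} (hw : w ≠ 0) (ε : ZMod 2) :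
    signSum (fun z => Algebra.trace (ZMod 2) K (w * z) + ε) = 0 := by
  rw [signSum_add_const, signSum_trace_mul_of_ne_zero hw, mul_zero]

lemma abs_signSum_trace_zero_mul_add_const (ε : ZMod 2) :
    |signSum (fun z => Algebra.trace (ZMod 2) K (0 * z) + ε)| = Fintype.card K := by
  simp [signSum_const]

def walsh (c : K → ZMod 2) (w : K) : ℤ :=
  signSum (fun z => c z + Algebra.trace (ZMod 2) K (w * z))

lemma walsh_zero (c : K → ZMod 2) : walsh c 0 = signSum c := by
  simp [walsh]

lemma signSum_traceTwist (c : K → ZMod 2) (x w : K) :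
    signSum (traceTwist c x w) = (-1) ^ (Algebra.trace (ZMod 2) K (w * x)).val * walsh c w :=
  signSum_add_const _ _

lemma signSum_add_traceTwist_of_ne_zero (c : K → ZMod 2) (x : K) {w : K} (hw : w ≠ 0) :
    signSum (c + traceTwist c x w) = 0 := by
  have h : c + traceTwist c x w
      = fun z => Algebra.trace (ZMod 2) K (w * z) + Algebra.trace (ZMod 2) K (w * x) := by
    ext z
    simp only [Pi.add_apply, traceTwist]
    linear_combination CharTwo.add_self_eq_zero (c z)
  rw [h, signSum_trace_mul_add_const_of_ne_zero hw]

lemma signSum_traceTwist_eq_iff {c : K → ZMod 2} {x y w : K} {s : ℤ} (hy : c y = 1)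
    (hs : signSum (traceTwist c x w) = s) (hs0 : s ≠ 0) :
    signSum (traceTwist c y w) = s ↔ traceTwist c x w y ≠ 0 := by
  have hval : traceTwist c x w y
      = 1 + (Algebra.trace (ZMod 2) K (w * x) + Algebra.trace (ZMod 2) K (w * y)) := by
    simp only [traceTwist, hy]; ring
  rw [traceTwist_eq_add c x y, signSum_add_const, hs, hval, mul_left_eq_self₀, or_iff_left hs0,
    neg_one_pow_val_eq_one_iff]
  generalize Algebra.trace (ZMod 2) K (w * x) + Algebra.trace (ZMod 2) K (w * y) = e
  revert e; decide

lemma sum_signSum_traceTwist (c : K → ZMod 2) (x : K) :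
    ∑ w, signSum (traceTwist c x w) = Fintype.card K * (-1) ^ (c x).val := by
  have h : ∀ w z, (-1 : ℤ) ^ (traceTwist c x w z).val
      = (-1) ^ (c z).val * (-1) ^ (Algebra.trace (ZMod 2) K ((z - x) * w)).val := by
    intro w z
    rw [traceTwist, add_assoc, neg_one_pow_val_add, mul_comm _ w, mul_sub, map_sub,
      CharTwo.sub_eq_add]
  simp only [signSum, h]
  rw [sum_comm]
  simp only [← mul_sum]
  rw [sum_eq_single x]
  · simp [mul_comm]
  · intro z _ hz
    exact mul_eq_zero_of_right _ (signSum_trace_mul_of_ne_zero (sub_ne_zero.2 hz))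
  · simp

lemma four_mul_sq_mul_ncard_traceTwist {c : K → ZMod 2} {s : ℤ} (hW : ∀ w, |walsh c w| = s)
    {x y : K} (hx : c x = 1) (hy : c y = 1) (hxy : x ≠ y) :
    4 * s ^ 2 * {w | signSum (traceTwist c x w) = s ∧ signSum (traceTwist c y w) = s}.ncard
      = Fintype.card K * s * (s - 2) := by
  have habs : ∀ z w, |signSum (traceTwist c z w)| = s := fun z w => by
    rw [signSum_traceTwist, abs_mul, abs_neg_one_pow, one_mul, hW]
  have hchar : ∑ w, (-1 : ℤ) ^ (Algebra.trace (ZMod 2) K (w * x)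
      + Algebra.trace (ZMod 2) K (w * y)).val = 0 := by
    rw [← signSum_trace_mul_of_ne_zero (sub_ne_zero.2 hxy)]
    refine sum_congr rfl fun w _ => ?_
    dsimp only
    rw [mul_comm _ w, mul_sub, map_sub, CharTwo.sub_eq_add]
  have hprod : ∑ w, signSum (traceTwist c x w) * signSum (traceTwist c y w) = 0 := by
    simp only [traceTwist_eq_add c x y, signSum_add_const, mul_left_comm _ ((-1 : ℤ) ^ _),
      ← sq, ← sq_abs (signSum (traceTwist c x _)), habs, ← sum_mul, hchar, zero_mul]
  calc 4 * s ^ 2 * {w | signSum (traceTwist c x w) = s ∧ signSum (traceTwist c y w) = s}.ncard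
      = ∑ w, (s + signSum (traceTwist c x w)) * (s + signSum (traceTwist c y w)) :=
        four_mul_sq_mul_ncard_eq_sum (habs x) (habs y)
    _ = Fintype.card K * s ^ 2 + s * ∑ w, signSum (traceTwist c x w)
          + s * ∑ w, signSum (traceTwist c y w)
          + ∑ w, signSum (traceTwist c x w) * signSum (traceTwist c y w) := by
        simp only [add_mul, mul_add, sum_add_distrib, ← sum_mul, ← mul_sum, sum_const,
          card_univ, nsmul_eq_mul]
        ring
    _ = Fintype.card K * s * (s - 2) := by
        rw [sum_signSum_traceTwist, sum_signSum_traceTwist, hprod, hx, hy, ZMod.val_one]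
        ring

end Trace

lemma card_galoisField_two {n : ℕ} (hn : n ≠ 0) : Fintype.card (GaloisField 2 n) = 2 ^ n := by
  rw [← Nat.card_eq_fintype_card, GaloisField.card 2 n hn]

section Code

variable {m ℓ : ℕ} {f : Fin ℓ → GaloisField 2 (2*m) → ZMod 2}

lemma exists_eq_of_mem_code {c : GaloisField 2 (2*m) → ZMod 2} (hc : c ∈ code m ℓ f) :
    ∃ (a : Fin ℓ → ZMod 2) (w : GaloisField 2 (2*m)) (ε : ZMod 2),
      c = fun z => ∑ j, a j * f j z + tr m (w * z) + ε := by
  induction hc using Submodule.span_induction with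
  | mem c hc =>
    rcases hc with (⟨j, rfl⟩ | ⟨w, rfl⟩) | rfl
    · exact ⟨Pi.single j 1, 0, 0, by ext z; simp [Pi.single_apply, tr]⟩
    · exact ⟨0, w, 0, by ext z; simp⟩
    · exact ⟨0, 0, 1, by ext z; simp [tr]⟩
  | zero => exact ⟨0, 0, 0, by ext z; simp [tr]⟩
  | add c d _ _ hc hd =>
    obtain ⟨a, w, ε, rfl⟩ := hc
    obtain ⟨b, w', ε', rfl⟩ := hd
    refine ⟨a + b, w + w', ε + ε', ?_⟩
    ext z
    simp only [Pi.add_apply, add_mul, sum_add_distrib, tr, map_add]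
    ring
  | smul r c _ hc =>
    obtain ⟨a, w, ε, rfl⟩ := hc
    refine ⟨r • a, r • w, r * ε, ?_⟩
    ext z
    simp only [Pi.smul_apply, smul_eq_mul, tr, smul_mul_assoc, map_smul, mul_add, mul_sum,
      mul_assoc]

lemma traceTwist_mem_code {u : GaloisField 2 (2*m) → ZMod 2} (hu : u ∈ code m ℓ f)
    (x w : GaloisField 2 (2*m)) : traceTwist u x w ∈ code m ℓ f := by
  have hlin : (fun z => tr m (w * z)) ∈ code m ℓ f :=
    Submodule.subset_span (Or.inl (Or.inr ⟨w, rfl⟩))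
  have hone : (fun _ => (1 : ZMod 2)) ∈ code m ℓ f := Submodule.subset_span (Or.inr rfl)
  convert add_mem (add_mem hu hlin) (Submodule.smul_mem _ (tr m (w * x)) hone) using 1
  ext z
  simp [traceTwist, tr]

lemma mem_code_cases (hf : IsBentVectorial m ℓ f) {c : GaloisField 2 (2*m) → ZMod 2}
    (hc : c ∈ code m ℓ f) :
    (∃ w ε, c = fun z => tr m (w * z) + ε) ∨ ∀ w, |walsh c w| = 2 ^ m := by
  obtain ⟨a, w₀, ε, rfl⟩ := exists_eq_of_mem_code hc
  by_cases ha : a = 0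
  · exact .inl ⟨w₀, ε, by simp [ha]⟩
  refine .inr fun w => ?_
  have h : walsh (fun z => ∑ j, a j * f j z + tr m (w₀ * z) + ε) w
      = (-1) ^ ε.val * walsh (fun z => ∑ j, a j * f j z) (w₀ + w) := by
    rw [walsh, walsh, ← signSum_add_const]
    congr 1
    ext z
    simp only [tr, add_mul, map_add]
    ring
  rw [h, abs_mul, abs_neg_one_pow, one_mul]
  exact hf a ha (w₀ + w)

lemma abs_walsh_of_mem_code (hm : m ≠ 0) (hf : IsBentVectorial m ℓ f)
    {u : GaloisField 2 (2*m) → ZMod 2} (hu : u ∈ code m ℓ f) (hsu : signSum u = 2 ^ m) :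
    ∀ w, |walsh u w| = 2 ^ m := by
  rcases mem_code_cases hf hu with ⟨w, ε, rfl⟩ | h
  · exfalso
    by_cases hw : w = 0
    · subst hw
      have h := abs_signSum_trace_zero_mul_add_const (K := GaloisField 2 (2*m)) ε
      rw [card_galoisField_two (by omega)] at h
      change |signSum (fun z => tr m (0 * z) + ε)| = _ at h
      rw [hsu, abs_pow, abs_two] at h
      have := Nat.pow_right_injective le_rfl (by exact_mod_cast h)
      omega
    · have h := signSum_trace_mul_add_const_of_ne_zero hw ε
      change signSum (fun z => tr m (w * z) + ε) = 0 at h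
      rw [hsu] at h
      exact pow_ne_zero m two_ne_zero h
  · exact h

lemma exists_eq_trace_of_mem_code (hm : m ≠ 0) (hf : IsBentVectorial m ℓ f)
    {c : GaloisField 2 (2*m) → ZMod 2} (hc : c ∈ code m ℓ f) (hsc : signSum c = 0) :
    ∃ w ≠ 0, ∃ ε, ∀ z, c z = tr m (w * z) + ε := by
  rcases mem_code_cases hf hc with ⟨w, ε, rfl⟩ | h
  · refine ⟨w, ?_, ε, fun _ => rfl⟩
    rintro rfl
    have h := abs_signSum_trace_zero_mul_add_const (K := GaloisField 2 (2*m)) ε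
    change |signSum (fun z => tr m (0 * z) + ε)| = _ at h
    rw [hsc, abs_zero, card_galoisField_two (by omega)] at h
    exact absurd h.symm (by positivity)
  · have h0 := h 0
    rw [walsh_zero, hsc, abs_zero] at h0
    exact absurd h0.symm (by positivity)

lemma wt_eq_iff_signSum_eq (hm : m ≠ 0) (c : GaloisField 2 (2*m) → ZMod 2) :
    wt m c = 2^(2*m-1) - 2^(m-1) ↔ signSum c = 2^m := by
  have hle : 2 ^ (m - 1) ≤ 2 ^ (2 * m - 1) := Nat.pow_le_pow_right two_pos (by omega)
  have h2m := two_pow_eq_two_mul_two_pow_pred (n := 2 * m) (by omega)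
  have hm' : (2 : ℤ) ^ m = 2 * ((2 ^ (m - 1) : ℕ) : ℤ) := by
    exact_mod_cast two_pow_eq_two_mul_two_pow_pred hm
  rw [signSum_eq_card_sub, card_galoisField_two (by omega), h2m, hm', wt]
  omega

lemma ncard_supp_inter_eq_iff (hm : m ≠ 0) {u v : GaloisField 2 (2*m) → ZMod 2}
    (hu : signSum u = 2^m) (hv : signSum v = 2^m) :
    (supp m u ∩ supp m v).ncard = 2^(2*m-2) - 2^(m-1) ↔ signSum (u + v) = 0 := by
  have hle : 2 ^ (m - 1) ≤ 2 ^ (2 * m - 2) := Nat.pow_le_pow_right two_pos (by omega)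
  have h2m := two_pow_eq_two_mul_two_pow_pred (n := 2 * m) (by omega)
  have h2m' := two_pow_eq_two_mul_two_pow_pred (n := 2 * m - 1) (by omega)
  have hm' : (2 : ℤ) ^ m = 2 * ((2 ^ (m - 1) : ℕ) : ℤ) := by
    exact_mod_cast two_pow_eq_two_mul_two_pow_pred hm
  have h := four_mul_ncard_inter u v
  rw [hu, hv, card_galoisField_two (by omega), h2m, h2m', hm',
    show 2 * m - 1 - 1 = 2 * m - 2 by omega] at h
  rw [supp, supp]
  omega

lemma ncard_setOf_signSum_traceTwist_eq (hm : m ≠ 0) {u : GaloisField 2 (2*m) → ZMod 2}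
    (hW : ∀ w, |walsh u w| = 2 ^ m) {x y : GaloisField 2 (2*m)} (hx : u x = 1) (hy : u y = 1)
    (hxy : x ≠ y) :
    {w | signSum (traceTwist u x w) = 2^m ∧ signSum (traceTwist u y w) = 2^m}.ncard
      = 2^(2*m-2) - 2^(m-1) := by
  have h := four_mul_sq_mul_ncard_traceTwist hW hx hy hxy
  set q := {w | signSum (traceTwist u x w) = 2^m ∧ signSum (traceTwist u y w) = 2^m}.ncard
  obtain ⟨B, hB⟩ : ∃ B : ℕ, 2 ^ (m - 1) = B := ⟨_, rfl⟩
  have hBpos : 0 < B := hB ▸ by positivity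
  have hm2 : (2 : ℤ) ^ m = 2 * B := by
    rw [← hB]; exact_mod_cast two_pow_eq_two_mul_two_pow_pred hm
  have hsq : 2 ^ (2 * m - 2) = B * B := by
    rw [← hB, ← pow_two, ← pow_mul]; congr 1; omega
  rw [card_galoisField_two (by omega), Nat.cast_pow, Nat.cast_ofNat, mul_comm 2 m, pow_mul,
    hm2] at h
  have hq : (q : ℤ) = B * B - B := by
    have hne : (16 : ℤ) * B ^ 2 ≠ 0 := by positivity
    apply mul_left_cancel₀ hne
    linear_combination h
  rw [hsq, hB]
  zify [Nat.le_mul_self B]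
  exact hq

lemma setOf_eq_image_traceTwist (hm : m ≠ 0) (hf : IsBentVectorial m ℓ f)
    {u : GaloisField 2 (2*m) → ZMod 2} (hu : u ∈ code m ℓ f) (hsu : signSum u = 2 ^ m)
    {x y : GaloisField 2 (2*m)} (hx : u x = 1) (hy : u y = 1) :
    {v | v ∈ code m ℓ f ∧ wt m v = 2^(2*m-1) - 2^(m-1) ∧
        (supp m u ∩ supp m v).ncard = 2^(2*m-2) - 2^(m-1) ∧ x ∈ supp m v ∧ y ∈ supp m v}
      = traceTwist u x ''
          ({w | signSum (traceTwist u x w) = 2^m ∧ signSum (traceTwist u y w) = 2^m} \ {0}) := by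
  have hs0 : (2 : ℤ) ^ m ≠ 0 := pow_ne_zero m two_ne_zero
  ext v
  constructor
  · rintro ⟨hv, hwv, hcap, hvx, hvy⟩
    rw [wt_eq_iff_signSum_eq hm] at hwv
    rw [ncard_supp_inter_eq_iff hm hsu hwv] at hcap
    obtain ⟨w, hw, ε, hε⟩ := exists_eq_trace_of_mem_code hm hf (add_mem hu hv) hcap
    obtain rfl : v = traceTwist u x w :=
      eq_traceTwist_of_add_eq u x hε (by rw [hx, eq_one_of_ne_zero_zmod_two hvx])
    exact ⟨w, ⟨⟨hwv, (signSum_traceTwist_eq_iff hy hwv hs0).2 hvy⟩, hw⟩, rfl⟩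
  · rintro ⟨w, ⟨⟨hsx, hsy⟩, hw⟩, rfl⟩
    refine ⟨traceTwist_mem_code hu x w, (wt_eq_iff_signSum_eq hm _).2 hsx,
      (ncard_supp_inter_eq_iff hm hsu hsx).2 (signSum_add_traceTwist_of_ne_zero u x hw), ?_,
      (signSum_traceTwist_eq_iff hy hsx hs0).1 hsy⟩
    change traceTwist u x w x ≠ 0
    rw [traceTwist_apply_self, hx]
    exact one_ne_zero

end Code

theorem stmt_9_general (m ℓ : ℕ) (hm : 2 ≤ m)
    (f : Fin ℓ → GaloisField 2 (2*m) → ZMod 2) (hf : IsBentVectorial m ℓ f)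
    (u : GaloisField 2 (2*m) → ZMod 2)
    (hu : u ∈ code m ℓ f) (hwu : wt m u = 2^(2*m-1) - 2^(m-1)) :
    ∀ x y : GaloisField 2 (2*m), x ∈ supp m u → y ∈ supp m u → x ≠ y →
      {v | v ∈ code m ℓ f ∧ wt m v = 2^(2*m-1) - 2^(m-1) ∧
          (supp m u ∩ supp m v).ncard = 2^(2*m-2) - 2^(m-1) ∧
          x ∈ supp m v ∧ y ∈ supp m v}.ncard =
        2^(2*m-2) - 2^(m-1) - 1 := by
  intro x y hx hy hxy
  have hm0 : m ≠ 0 := by omega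
  have hsu : signSum u = 2 ^ m := (wt_eq_iff_signSum_eq hm0 u).1 hwu
  have hux : u x = 1 := eq_one_of_ne_zero_zmod_two hx
  have huy : u y = 1 := eq_one_of_ne_zero_zmod_two hy
  have h0 : 0 ∈ {w | signSum (traceTwist u x w) = 2^m ∧ signSum (traceTwist u y w) = 2^m} := by
    simp [traceTwist_zero, hsu]
  rw [setOf_eq_image_traceTwist hm0 hf hu hsu hux huy,
    Set.ncard_image_of_injective _ (traceTwist_injective u x), Set.ncard_sdiff_singleton_of_mem h0,
    ncard_setOf_signSum_traceTwist_eq hm0 (abs_walsh_of_mem_code hm0 hf hu hsu) hux huy hxy]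

/-- the derived design of the design supported by the minimum
weight codewords of `C(f_1, …, f_ℓ)` with respect to a block `B = supp u` is a
`2-(2^(2m-1) - 2^(m-1), 2^(2m-2) - 2^(m-1), 2^(2m-2) - 2^(m-1) - 1)` design. -/
theorem stmt_9 (m ℓ : ℕ) (hm : 2 ≤ m) (hℓ1 : 1 ≤ ℓ) (hℓm : ℓ ≤ m)
    (f : Fin ℓ → GaloisField 2 (2*m) → ZMod 2) (hf : IsBentVectorial m ℓ f)
    (u : GaloisField 2 (2*m) → ZMod 2)
    (hu : u ∈ code m ℓ f) (hwu : wt m u = 2^(2*m-1) - 2^(m-1)) :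
    ∀ x y : GaloisField 2 (2*m), x ∈ supp m u → y ∈ supp m u → x ≠ y →
      {v | v ∈ code m ℓ f ∧ wt m v = 2^(2*m-1) - 2^(m-1) ∧
          (supp m u ∩ supp m v).ncard = 2^(2*m-2) - 2^(m-1) ∧
          x ∈ supp m v ∧ y ∈ supp m v}.ncard =
        2^(2*m-2) - 2^(m-1) - 1 :=
  stmt_9_general m ℓ hm f hf u hu hwu
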